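/- arXiv:2106.10521 — 4 statements merged into one kernel-verified Lean document; each statement's English description precedes it below -/
import Mathlib

section
/- All basic zone tariffs with respect to a price function P : ℕ_{≥1} → ℝ_{≥0} satisfy the no-stopover property if and only if P(k) ≤ P(i) + P(k−i+1) for all k ≥ 1 and all i ∈ {1,...,k}. -/
open scoped Classical

/-- A path in a graph given by adjacency relation `adj`: a nonempty list of
consecutively adjacent nodes. -/
def IsPath {V : Type*} (adj : V → V → Prop) (W : List V) : Prop :=
  W ≠ [] ∧ W.Chain' adj

/-- An `x`-`y`-path. -/
def IsXYPath {V : Type*} (adj : V → V → Prop) (x y : V) (W : List V) : Prop :=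
  IsPath adj W ∧ W.head? = some x ∧ W.getLast? = some y

/-- `W` decomposes as the concatenation `W₁ + W₂` (the last node of `W₁` is the
first node of `W₂`). -/
def Splits {V : Type*} (W W₁ W₂ : List V) : Prop :=
  W₁ ≠ [] ∧ W₂ ≠ [] ∧ W₁.getLast? = W₂.head? ∧ W = W₁ ++ W₂.tail

/-- `W` splits at an intermediate node into `W₁ + W₂` (both parts have at least
two nodes). -/
def SplitsAt {V : Type*} (W W₁ W₂ : List V) : Prop :=
  2 ≤ W₁.length ∧ 2 ≤ W₂.length ∧ W₁.getLast? = W₂.head? ∧ W = W₁ ++ W₂.tail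

/-- The no-stopover property: splitting a path at an intermediate node never
decreases the total price. -/
def NoStopover {V : Type*} (adj : V → V → Prop) (p : List V → ℝ) : Prop :=
  ∀ W W₁ W₂ : List V, IsPath adj W → IsPath adj W₁ → IsPath adj W₂ →
    SplitsAt W W₁ W₂ → p W ≤ p W₁ + p W₂

/-- The no-elongation property: removing the last node of a path never
increases the price. -/
def NoElongation {V : Type*} (adj : V → V → Prop) (p : List V → ℝ) : Prop :=
  ∀ W : List V, IsPath adj W → 2 ≤ W.length → p W.dropLast ≤ p W

/-- Number of zone borders crossed by a path (basic zone tariff). -/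
noncomputable def zoneBorders {V Z : Type*} (zone : V → Z) : List V → ℕ
  | x :: y :: rest => (if zone x = zone y then 0 else 1) + zoneBorders zone (y :: rest)
  | _ => 0

/-!
Splitting a path at an intermediate node splits its zone borders, so `z(W) - 1` is additive
under concatenation and the no-stopover property for all basic zone tariffs is exactly
subadditivity of `n ↦ P (1 + n)`. For the converse, a path that revisits its first zone
(`[s, s, s + 1, …, s + n]` with zones `id`) crosses any prescribed number `n ≥ 0` of borders
while having at least two nodes, so every pair of border counts is realised by a split path.
-/

section ZoneBorders

variable {V Z : Type*} (zone : V → Z)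

lemma zoneBorders_cons_self (x : V) (l : List V) :
    zoneBorders zone (x :: x :: l) = zoneBorders zone (x :: l) := by
  simp [zoneBorders]

lemma zoneBorders_append_cons (l₁ : List V) (x : V) (l₂ : List V) :
    zoneBorders zone (l₁ ++ x :: l₂) =
      zoneBorders zone (l₁ ++ [x]) + zoneBorders zone (x :: l₂) := by
  induction l₁ with
  | nil => simp [zoneBorders]
  | cons a l ih =>
    cases l with
    | nil => simp [zoneBorders]
    | cons b l => simp only [List.cons_append, zoneBorders] at ih ⊢; omega

lemma zoneBorders_of_splitsAt {W W₁ W₂ : List V} (h : SplitsAt W W₁ W₂) :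
    zoneBorders zone W = zoneBorders zone W₁ + zoneBorders zone W₂ := by
  obtain ⟨hW₁, hW₂, hlast, rfl⟩ := h
  obtain ⟨x, l₂, rfl⟩ : ∃ x l₂, W₂ = x :: l₂ := List.exists_cons_of_length_pos (by omega)
  obtain ⟨l₁, y, rfl⟩ : ∃ l₁ y, W₁ = l₁ ++ [y] :=
    (List.eq_nil_or_concat' W₁).resolve_left (List.ne_nil_of_length_pos (by omega))
  obtain rfl : y = x := by simpa using hlast
  rw [List.tail_cons, List.append_assoc, List.singleton_append, zoneBorders_append_cons]

end ZoneBorders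

lemma zoneBorders_id_range' (s n : ℕ) : zoneBorders id (List.range' s (n + 1)) = n := by
  induction n generalizing s with
  | zero => simp [zoneBorders]
  | succ n ih =>
    rw [List.range'_succ, List.range'_succ, zoneBorders, ← List.range'_succ, ih]
    simp only [id, Nat.left_eq_add, one_ne_zero, ite_false]
    omega

def stutterPath (s n : ℕ) : List ℕ := s :: List.range' s (n + 1)

lemma zoneBorders_stutterPath (s n : ℕ) : zoneBorders id (stutterPath s n) = n := by
  rw [stutterPath, List.range'_succ, zoneBorders_cons_self, ← List.range'_succ,
    zoneBorders_id_range']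

lemma length_stutterPath (s n : ℕ) : (stutterPath s n).length = n + 2 := by
  simp [stutterPath]

lemma getLast?_stutterPath (s n : ℕ) : (stutterPath s n).getLast? = some (s + n) := by
  simp [stutterPath, List.getLast?_cons, List.getLast?_range']

lemma IsPath.of_forall_adj {V : Type*} {adj : V → V → Prop} (hadj : ∀ x y, adj x y)
    {W : List V} (hW : W ≠ []) : IsPath adj W :=
  ⟨hW, (List.pairwise_of_forall hadj).isChain⟩

lemma noStopover_of_subadditive {P : ℕ → ℝ} (hP : Subadditive fun n => P (1 + n))
    {V Z : Type*} (adj : V → V → Prop) (zone : V → Z) :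
    NoStopover adj (fun W => P (1 + zoneBorders zone W)) := by
  intro W W₁ W₂ _ _ _ hsplit
  simpa only [zoneBorders_of_splitsAt zone hsplit] using hP _ _

lemma subadditive_of_noStopover {P : ℕ → ℝ}
    (h : NoStopover (fun _ _ : ℕ => True) (fun W => P (1 + zoneBorders id W))) :
    Subadditive fun n => P (1 + n) := by
  intro a b
  have hsplit : SplitsAt (stutterPath 0 a ++ (stutterPath a b).tail)
      (stutterPath 0 a) (stutterPath a b) :=
    ⟨by simp [length_stutterPath], by simp [length_stutterPath],
      by rw [getLast?_stutterPath, zero_add]; rfl, rfl⟩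
  have hpath (W : List ℕ) (hW : W ≠ []) : IsPath (fun _ _ => True) W :=
    IsPath.of_forall_adj (fun _ _ => trivial) hW
  simpa only [zoneBorders_of_splitsAt id hsplit, zoneBorders_stutterPath] using
    h _ _ _ (hpath _ (by simp [stutterPath])) (hpath _ (by simp [stutterPath]))
      (hpath _ (by simp [stutterPath])) hsplit

lemma subadditive_one_add_iff (P : ℕ → ℝ) :
    Subadditive (fun n => P (1 + n)) ↔
      ∀ k i : ℕ, 1 ≤ k → 1 ≤ i → i ≤ k → P k ≤ P i + P (k - i + 1) := by
  constructor
  · intro h k i _ hi hik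
    have : P (1 + (i - 1 + (k - i))) ≤ P (1 + (i - 1)) + P (1 + (k - i)) := h _ _
    rwa [show 1 + (i - 1 + (k - i)) = k by omega, show 1 + (i - 1) = i by omega,
      show 1 + (k - i) = k - i + 1 by omega] at this
  · intro h m n
    have := h (1 + m + n) (1 + m) (by omega) (by omega) (by omega)
    rwa [show 1 + m + n - (1 + m) + 1 = 1 + n by omega, add_assoc] at this

theorem basic_zone_no_stopover_iff_general (P : ℕ → ℝ) :
    (∀ (V Z : Type) (adj : V → V → Prop) (zone : V → Z),
        NoStopover adj (fun W => P (1 + zoneBorders zone W))) ↔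
      (∀ k i : ℕ, 1 ≤ k → 1 ≤ i → i ≤ k → P k ≤ P i + P (k - i + 1)) := by
  rw [← subadditive_one_add_iff]
  exact ⟨fun h => subadditive_of_noStopover (h ℕ ℕ _ id),
    fun h V Z adj zone => noStopover_of_subadditive h adj zone⟩

/-- All basic zone tariffs w.r.t. a price function `P : ℕ≥1 → ℝ≥0` (price of a
path `W` is `P(z(W))` with `z(W) = 1 +` number of zone borders crossed) satisfy
the no-stopover property if and only if `P(k) ≤ P(i) + P(k−i+1)` for all
`k ≥ 1` and `i ∈ {1,…,k}`. -/
theorem basic_zone_no_stopover_iff (P : ℕ → ℝ) (hP : ∀ k, 1 ≤ k → 0 ≤ P k) :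
    (∀ (V Z : Type) (adj : V → V → Prop) (zone : V → Z),
        NoStopover adj (fun W => P (1 + zoneBorders zone W))) ↔
      (∀ k i : ℕ, 1 ≤ k → 1 ≤ i → i ≤ k → P k ≤ P i + P (k - i + 1)) :=
  basic_zone_no_stopover_iff_general P
end

section
/- All basic zone tariffs with respect to a price function P satisfy the no-elongation property if and only if P is increasing (i.e., monotone nondecreasing). -/
open scoped Classical

/-!
A zone tariff can only grow along a path: appending a node adds at most one border crossing, so
monotonicity of `P` on `k ≥ 1` gives no-elongation. Conversely, on `ℕ` with every node its own
zone, the path `0, 1, …, m` crosses `m` borders and its truncation `m - 1`, so no-elongation forces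
`P m ≤ P (m + 1)`.
-/

theorem zoneBorders_dropLast_le {V Z : Type*} (zone : V → Z) :
    ∀ W : List V, zoneBorders zone W.dropLast ≤ zoneBorders zone W
  | [] => le_rfl
  | [_] => le_rfl
  | [_, _] => Nat.zero_le _
  | x :: y :: z :: rest => by
      have ih := zoneBorders_dropLast_le zone (y :: z :: rest)
      simp only [List.dropLast_cons_cons, zoneBorders] at ih ⊢
      omega

theorem zoneBorders_eq_length_sub_one {V Z : Type*} {zone : V → Z} :
    ∀ {W : List V}, W.IsChain (fun x y => zone x ≠ zone y) → zoneBorders zone W = W.length - 1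
  | [], _ => rfl
  | [_], _ => rfl
  | _ :: _ :: _, h => by
      rw [List.isChain_cons_cons] at h
      simp [zoneBorders, h.1, zoneBorders_eq_length_sub_one h.2, Nat.add_comm]

theorem zoneBorders_id_range (n : ℕ) : zoneBorders id (List.range n) = n - 1 := by
  rw [zoneBorders_eq_length_sub_one, List.length_range]
  exact (List.isChain_range _ n).2 fun m _ => (Nat.lt_succ_self m).ne

theorem le_succ_of_noElongation_zoneBorders_id {P : ℕ → ℝ}
    (h : NoElongation (· < ·) (fun W => P (1 + zoneBorders (id : ℕ → ℕ) W))) {m : ℕ}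
    (hm : 1 ≤ m) : P m ≤ P (m + 1) := by
  have hpath : IsPath (· < ·) (List.range (m + 1)) :=
    ⟨by simp, (List.isChain_range_succ _ m).2 fun k _ => k.lt_succ_self⟩
  have hdrop : (List.range (m + 1)).dropLast = List.range m := by
    rw [List.range_succ, List.dropLast_concat]
  calc P m = P (1 + zoneBorders id (List.range (m + 1)).dropLast) := by
        rw [hdrop, zoneBorders_id_range, Nat.add_sub_cancel' hm]
    _ ≤ P (1 + zoneBorders id (List.range (m + 1))) := h _ hpath (by simpa using hm)
    _ = P (m + 1) := by rw [zoneBorders_id_range, Nat.add_sub_cancel, add_comm]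

/-- All basic zone tariffs w.r.t. a price function `P` satisfy the
no-elongation property if and only if `P` is increasing (monotone
nondecreasing on `ℕ≥1`). -/
theorem basic_zone_no_elongation_iff (P : ℕ → ℝ) :
    (∀ (V Z : Type) (adj : V → V → Prop) (zone : V → Z),
        NoElongation adj (fun W => P (1 + zoneBorders zone W))) ↔
      (∀ k l : ℕ, 1 ≤ k → k ≤ l → P k ≤ P l) := by
  constructor
  · intro h k l hk hkl
    have h_succ : ∀ m ≥ 1, P m ≤ P (m + 1) := fun m hm =>
      le_succ_of_noElongation_zoneBorders_id (h ℕ ℕ (· < ·) id) hm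
    exact monotoneOn_nat_Ici_of_le_succ h_succ hk (hk.trans hkl) hkl
  · intro hP V Z adj zone W _ _
    exact hP _ _ (Nat.le_add_right 1 _) (Nat.add_le_add_left (zoneBorders_dropLast_le zone W) 1)
end

section
/- In a graph with a zone partition in which every zone induces a connected subgraph, any x-y-path minimizing the number of zone-border crossings also minimizes the number of distinct zones visited; hence the Minimum-Zone Path problem is solvable in polynomial time via a shortest-path computation with 0/1 zone-border edge weights. -/
open scoped Classical

/-- Number of distinct zones visited by a path (zone tariff without double
counting). -/
noncomputable def distinctZones {V Z : Type*} (zone : V → Z) (W : List V) : ℕ :=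
  (zone '' { v | v ∈ W }).ncard

/-! If a path re-enters a zone, the excursion between its first and its last visit can be
replaced by a detour inside that (connected) zone without visiting a new zone; after all such
surgeries every zone is visited along one contiguous segment, so the path crosses exactly one
border fewer than the number of zones it visits. In general a path visits at most one zone more
than the number of borders it crosses, so a border-minimal path is zone-minimal. -/

theorem IsXYPath.append {V : Type*} {adj : V → V → Prop} {x a b y : V} {P Q : List V}
    (hP : IsXYPath adj x a P) (hQ : IsXYPath adj b y Q) (hab : adj a b) :
    IsXYPath adj x y (P ++ Q) := by
  obtain ⟨⟨hPne, hPchain⟩, hPx, hPa⟩ := hP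
  obtain ⟨⟨hQne, hQchain⟩, hQb, hQy⟩ := hQ
  refine ⟨⟨by simp [hPne], hPchain.append hQchain ?_⟩, ?_, ?_⟩
  · simp_all
  · rw [List.head?_append, hPx]; rfl
  · rw [List.getLast?_append, hQy]; rfl

section Zones

variable {V Z : Type*} (zone : V → Z)

theorem zoneBorders_eq_zero_of_forall_zone_eq {c : Z} :
    ∀ {P : List V}, (∀ v ∈ P, zone v = c) → zoneBorders zone P = 0
  | [], _ | [_], _ => rfl
  | a :: b :: P, hP => by
    have hab : zone a = zone b := by rw [hP a (by simp), hP b (by simp)]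
    simp only [zoneBorders, if_pos hab, zero_add]
    exact zoneBorders_eq_zero_of_forall_zone_eq fun v hv => hP v (.tail a hv)

theorem zoneBorders_append_cons_of_forall_zone_eq {c : Z} {b : V} (hb : zone b ≠ c)
    (Q : List V) : ∀ {P : List V}, P ≠ [] → (∀ v ∈ P, zone v = c) →
      zoneBorders zone (P ++ b :: Q) = zoneBorders zone (b :: Q) + 1
  | [a], _, hP => by
    have hab : zone a ≠ zone b := by rw [hP a (by simp)]; exact hb.symm
    simp only [List.cons_append, List.nil_append, zoneBorders, if_neg hab]
    omega
  | a :: a' :: P, _, hP => by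
    have haa' : zone a = zone a' := by rw [hP a (by simp), hP a' (by simp)]
    simp only [List.cons_append, zoneBorders, if_pos haa', zero_add]
    exact zoneBorders_append_cons_of_forall_zone_eq hb Q (by simp)
      fun v hv => hP v (.tail a hv)

theorem distinctZones_eq_card_toFinset (W : List V) :
    distinctZones zone W = (W.map zone).toFinset.card := by
  rw [distinctZones, ← Set.ncard_coe_finset]
  congr 1
  ext
  simp

theorem distinctZones_cons (a : V) (W : List V) :
    distinctZones zone (a :: W) = (insert (zone a) (W.map zone).toFinset).card := by
  rw [distinctZones_eq_card_toFinset, List.map_cons, List.toFinset_cons]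

theorem distinctZones_le_distinctZones_cons (a : V) (W : List V) :
    distinctZones zone W ≤ distinctZones zone (a :: W) := by
  rw [distinctZones_cons, distinctZones_eq_card_toFinset]
  exact Finset.card_le_card (Finset.subset_insert _ _)

theorem distinctZones_le_zoneBorders_add_one :
    ∀ {W : List V}, W ≠ [] → distinctZones zone W ≤ zoneBorders zone W + 1
  | [a], _ => by simp [distinctZones_cons]
  | a :: b :: W, _ => by
    have ih := distinctZones_le_zoneBorders_add_one (W := b :: W) (by simp)
    rw [distinctZones_eq_card_toFinset] at ih
    rw [distinctZones_cons, zoneBorders]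
    split_ifs with hab
    · rw [Finset.insert_eq_of_mem (by simp [hab])]
      omega
    · have := Finset.card_insert_le (zone a) ((b :: W).map zone).toFinset
      omega

theorem exists_isXYPath_zoneBorders_lt_distinctZones {adj : V → V → Prop}
    (hconn : ∀ x y : V, zone x = zone y →
      ∃ W : List V, IsXYPath adj x y W ∧ ∀ v ∈ W, zone v = zone x) {y : V} :
    ∀ {W : List V}, W.IsChain adj → W.getLast? = some y → ∀ {x : V}, zone x ∈ W.map zone →
      ∃ W', IsXYPath adj x y W' ∧ zoneBorders zone W' < distinctZones zone W
  | a :: W, hchain, hy, x, hx => by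
    by_cases hxW : zone x ∈ W.map zone
    · have hWne : W ≠ [] := by rintro rfl; simp at hxW
      rw [List.getLast?_cons_of_ne_nil hWne] at hy
      obtain ⟨W', hW', hlt⟩ :=
        exists_isXYPath_zoneBorders_lt_distinctZones hconn hchain.tail hy hxW
      exact ⟨W', hW', hlt.trans_le (distinctZones_le_distinctZones_cons zone a W)⟩
    have hxa : zone x = zone a := by simpa [hxW] using hx
    obtain ⟨P, hP, hPzone⟩ := hconn x a hxa
    cases W with
    | nil =>
      obtain rfl : a = y := by simpa using hy
      refine ⟨P, hP, ?_⟩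
      simp [zoneBorders_eq_zero_of_forall_zone_eq zone hPzone, distinctZones_cons]
    | cons b W =>
      obtain ⟨hab, hchain⟩ := List.isChain_cons_cons.mp hchain
      obtain ⟨Q, hQ, hlt⟩ := exists_isXYPath_zoneBorders_lt_distinctZones hconn hchain
        (by rwa [List.getLast?_cons_cons] at hy) (List.mem_cons_self ..)
      rcases Q with _ | ⟨b', Q⟩
      · exact absurd rfl hQ.1.1
      obtain rfl : b = b' := by simpa using hQ.2.1.symm
      have hbx : zone b ≠ zone x := fun h => hxW (h ▸ List.mem_cons_self ..)
      refine ⟨P ++ b :: Q, hP.append hQ hab, ?_⟩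
      rw [zoneBorders_append_cons_of_forall_zone_eq zone hbx Q hP.1.1 hPzone,
        distinctZones_cons, Finset.card_insert_of_notMem (by simpa [← hxa] using hxW),
        ← distinctZones_eq_card_toFinset]
      omega

end Zones

/-- If every zone of a zone partition induces a connected subgraph, then any
`x`-`y`-path minimizing the number of zone-border crossings also minimizes the
number of distinct zones visited (so Minimum-Zone Path reduces to a shortest
path computation with 0/1 zone-border edge weights and is solvable in
polynomial time). -/
theorem connected_zones_min_border_min_zones {V Z : Type*}
    (adj : V → V → Prop) (zone : V → Z)
    (hconn : ∀ x y : V, zone x = zone y →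
      ∃ W : List V, IsXYPath adj x y W ∧ ∀ v ∈ W, zone v = zone x)
    (x y : V) (W : List V) (hW : IsXYPath adj x y W)
    (hmin : ∀ W' : List V, IsXYPath adj x y W' →
      zoneBorders zone W ≤ zoneBorders zone W') :
    ∀ W' : List V, IsXYPath adj x y W' →
      distinctZones zone W ≤ distinctZones zone W' := by
  intro W' hW'
  have hx : zone x ∈ W'.map zone := List.mem_map_of_mem (List.mem_of_mem_head? hW'.2.1)
  obtain ⟨W'', hW'', hlt⟩ :=
    exists_isXYPath_zoneBorders_lt_distinctZones zone hconn hW'.1.2 hW'.2.2 hx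
  calc distinctZones zone W ≤ zoneBorders zone W + 1 :=
        distinctZones_le_zoneBorders_add_one zone hW.1.1
    _ ≤ zoneBorders zone W'' + 1 := by gcongr; exact hmin W'' hW''
    _ ≤ distinctZones zone W' := hlt
end

section
/- If two fare systems p_1 and p_2 on the same graph both satisfy the no-elongation property, then the combined fare system p(W) = min{p_1(W), p_2(W)} also satisfies the no-elongation property. In contrast, the analogous statement for the no-stopover property is false: there exist fare systems p_1, p_2 each satisfying the no-stopover property whose combination does not. -/
open scoped Classical

/-! The minimum of two fares is monotone in each of them, so any inequality of the form
`p W' ≤ p W` survives taking minima. Subadditivity does not: a zone tariff is cheap on a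
short hop inside one zone, a distance tariff is cheap on a short hop across a zone border,
while both are expensive on the whole trip. -/

theorem NoElongation.min {V : Type*} {adj : V → V → Prop} {p₁ p₂ : List V → ℝ}
    (h₁ : NoElongation adj p₁) (h₂ : NoElongation adj p₂) :
    NoElongation adj (fun W => min (p₁ W) (p₂ W)) := fun W hW hlen =>
  min_le_min (h₁ W hW hlen) (h₂ W hW hlen)

section ZoneFare

variable {V Z : Type*}

noncomputable def zoneFare (zone : V → Z) (W : List V) : ℝ :=
  (W.toFinset.image zone).card

theorem zoneFare_noStopover (adj : V → V → Prop) (zone : V → Z) :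
    NoStopover adj (zoneFare zone) := by
  rintro W W₁ W₂ - - - ⟨-, -, -, rfl⟩
  have hsub : (W₁ ++ W₂.tail).toFinset ⊆ W₁.toFinset ∪ W₂.toFinset := by
    intro x hx
    simp only [List.mem_toFinset, Finset.mem_union, List.mem_append] at hx ⊢
    exact hx.imp_right List.mem_of_mem_tail
  have hcard : ((W₁ ++ W₂.tail).toFinset.image zone).card ≤
      (W₁.toFinset.image zone).card + (W₂.toFinset.image zone).card :=
    calc _ ≤ (W₁.toFinset.image zone ∪ W₂.toFinset.image zone).card := by
          rw [← Finset.image_union]; exact Finset.card_le_card (Finset.image_mono zone hsub)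
      _ ≤ _ := Finset.card_union_le _ _
  unfold zoneFare
  exact_mod_cast hcard

end ZoneFare

section DistanceFare

variable {V : Type*}

def distanceFare (len : V → V → ℝ) : List V → ℝ
  | a :: b :: t => len a b + distanceFare len (b :: t)
  | _ => 0

theorem distanceFare_nonneg {len : V → V → ℝ} (hlen : ∀ a b, 0 ≤ len a b) (W : List V) :
    0 ≤ distanceFare len W := by
  induction W with
  | nil => rfl
  | cons a t ih =>
    cases t with
    | nil => rfl
    | cons b t => exact add_nonneg (hlen a b) ih

theorem distanceFare_append_tail (len : V → V → ℝ) {W₁ W₂ : List V}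
    (hmid : W₁.getLast? = W₂.head?) :
    distanceFare len (W₁ ++ W₂.tail) = distanceFare len W₁ + distanceFare len W₂ := by
  induction W₁ with
  | nil => cases W₂ <;> simp_all [distanceFare]
  | cons a t ih =>
    cases t with
    | nil => cases W₂ <;> simp_all [distanceFare]
    | cons b t =>
      rw [List.getLast?_cons_cons] at hmid
      simp only [List.cons_append, distanceFare] at ih ⊢
      rw [ih hmid, add_assoc]

theorem distanceFare_noStopover (adj : V → V → Prop) (len : V → V → ℝ) :
    NoStopover adj (distanceFare len) := by
  rintro W W₁ W₂ - - - ⟨-, -, hmid, rfl⟩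
  exact (distanceFare_append_tail len hmid).le

end DistanceFare

/- Stations 0 and 1 lie in one zone at kilometres 0 and 2, station 2 in the next zone at
kilometre 5/2: the fares of 0 → 1 and 1 → 2 are 1 (by zones) and 1/2 (by distance), while
0 → 1 → 2 costs min 2 (5/2) = 2. -/
theorem not_noStopover_min_zoneFare_distanceFare :
    ¬ NoStopover (SimpleGraph.pathGraph 3).Adj fun W =>
      min (zoneFare ![0, 0, 1] W)
        (distanceFare (fun a b => |(![0, 2, 5 / 2] : Fin 3 → ℝ) b - ![0, 2, 5 / 2] a|) W) := by
  intro h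
  refine (h [0, 1, 2] [0, 1] [1, 2] ?_ ?_ ?_ ⟨by simp, by simp, rfl, rfl⟩).not_gt ?_
  all_goals norm_num [IsPath, List.cons_ne_nil, List.Chain', SimpleGraph.pathGraph_adj,
    zoneFare, distanceFare, Matrix.cons_val_two]

/-- If two fare systems both satisfy the no-elongation property, then their
combined fare system `p(W) = min {p₁(W), p₂(W)}` satisfies it as well; in
contrast, there exist two fare systems each satisfying the no-stopover
property whose combined fare system does not. -/
theorem combined_fare_system_properties :
    (∀ (V : Type) (adj : V → V → Prop) (p₁ p₂ : List V → ℝ),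
        NoElongation adj p₁ → NoElongation adj p₂ →
        NoElongation adj (fun W => min (p₁ W) (p₂ W))) ∧
    (∃ (V : Type) (adj : V → V → Prop) (p₁ p₂ : List V → ℝ),
        (∀ W, IsPath adj W → 0 ≤ p₁ W) ∧ (∀ W, IsPath adj W → 0 ≤ p₂ W) ∧
        NoStopover adj p₁ ∧ NoStopover adj p₂ ∧
        ¬ NoStopover adj (fun W => min (p₁ W) (p₂ W))) :=
  ⟨fun _ _ _ _ => NoElongation.min,
    ⟨Fin 3, _, _, _, fun _ _ => Nat.cast_nonneg _,
      fun W _ => distanceFare_nonneg (fun _ _ => abs_nonneg _) W,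
      zoneFare_noStopover _ _, distanceFare_noStopover _ _,
      not_noStopover_min_zoneFare_distanceFare⟩⟩
end
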